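/- Let ψ₁,…,ψ_n ∈ ℂ^m be unit vectors with mutual coherence μ, let x₁,…,x_k be complex scalars with |x₁| ≥ … ≥ |x_k| > 0, and suppose k < (1/2)(1 + 1/μ). Then for every index i with k < i ≤ n, |∑_{t=1}^k x_t ⟨ψ₁, ψ_t⟩| > |∑_{t=1}^k x_t ⟨ψ_i, ψ_t⟩|. -/

import Mathlib

/-!
Let `M = |x₁|`. On the support, the correlation with `ψ₁` contains the term `x₁ ⟨ψ₁, ψ₁⟩ = x₁`
plus `k - 1` cross terms of size at most `M μ`, so it is at least `M - (k - 1) M μ`. Off the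
support all `k` terms are cross terms, so the correlation is at most `k M μ`. The sparsity
condition `k < (1 + 1/μ)/2` is exactly `(2k - 1) μ < 1`, i.e. `k M μ < M - (k - 1) M μ`.
-/

open scoped InnerProductSpace
open Finset

theorem norm_sum_mul_le_card_mul {κ R : Type*} [SeminormedRing R] (s : Finset κ)
    {a b : κ → R} {A B : ℝ} (ha : ∀ t ∈ s, ‖a t‖ ≤ A) (hb : ∀ t ∈ s, ‖b t‖ ≤ B) :
    ‖∑ t ∈ s, a t * b t‖ ≤ #s * (A * B) := by
  calc ‖∑ t ∈ s, a t * b t‖ ≤ ∑ _t ∈ s, A * B := norm_sum_le_of_le s fun t ht =>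
        (norm_mul_le _ _).trans <|
          mul_le_mul (ha t ht) (hb t ht) (norm_nonneg _) ((norm_nonneg _).trans (ha t ht))
    _ = #s * (A * B) := by rw [sum_const, nsmul_eq_mul]

section Coherence

variable {𝕜 E ι κ : Type*} [RCLike 𝕜] [NormedAddCommGroup E] [InnerProductSpace 𝕜 E]
  [Fintype κ] {ψ : ι → E} {μ M : ℝ} (hμ : ∀ i j, i ≠ j → ‖⟪ψ i, ψ j⟫_𝕜‖ ≤ μ)
  {e : κ → ι} {x : κ → 𝕜} (hx : ∀ t, ‖x t‖ ≤ M)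
include hμ hx

theorem norm_sum_mul_inner_le_of_notMem_range {i : ι} (hi : ∀ t, e t ≠ i) :
    ‖∑ t, x t * ⟪ψ i, ψ (e t)⟫_𝕜‖ ≤ Fintype.card κ * (M * μ) :=
  norm_sum_mul_le_card_mul univ (fun t _ => hx t) fun t _ => hμ i (e t) (hi t).symm

theorem norm_sub_mul_le_norm_sum_mul_inner (he : Function.Injective e) (t₀ : κ)
    (hψ : ‖ψ (e t₀)‖ = 1) :
    ‖x t₀‖ - (Fintype.card κ - 1) * (M * μ) ≤ ‖∑ t, x t * ⟪ψ (e t₀), ψ (e t)⟫_𝕜‖ := by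
  classical
  have hcross : ‖∑ t ∈ univ.erase t₀, x t * ⟪ψ (e t₀), ψ (e t)⟫_𝕜‖
      ≤ (Fintype.card κ - 1) * (M * μ) := by
    have := norm_sum_mul_le_card_mul (univ.erase t₀) (fun t _ => hx t)
      fun t ht => hμ (e t₀) (e t) (he.ne (ne_of_mem_erase ht).symm)
    rwa [card_erase_of_mem (mem_univ t₀), card_univ,
      Nat.cast_pred (Fintype.card_pos_iff.mpr ⟨t₀⟩)] at this
  rw [← add_sum_erase _ _ (mem_univ t₀), inner_self_eq_one_of_norm_eq_one hψ, mul_one]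
  linarith [norm_sub_le_norm_add (x t₀) (∑ t ∈ univ.erase t₀, x t * ⟪ψ (e t₀), ψ (e t)⟫_𝕜)]

end Coherence

theorem mul_lt_sub_pred_mul_of_lt_half_one_add_inv {k μ M : ℝ} (hμ : 0 < μ) (hM : 0 < M)
    (hk : k < 1 / 2 * (1 + 1 / μ)) : k * (M * μ) < M - (k - 1) * (M * μ) := by
  have hkμ : (2 * k - 1) * μ < 1 := by
    have := mul_lt_mul_of_pos_right hk hμ
    field_simp at this
    linarith
  nlinarith

theorem stmt_2 (m n k : ℕ) (hk : 1 ≤ k) (hkn : k ≤ n)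
    (ψ : Fin n → EuclideanSpace ℂ (Fin m)) (hnorm : ∀ i, ‖ψ i‖ = 1)
    (μ : ℝ) (hμ0 : 0 < μ) (hμ : ∀ i j : Fin n, i ≠ j → ‖⟪ψ i, ψ j⟫_ℂ‖ ≤ μ)
    (x : Fin k → ℂ) (hdec : ∀ s t : Fin k, s ≤ t → ‖x t‖ ≤ ‖x s‖)
    (hnz : ∀ t : Fin k, x t ≠ 0)
    (hsparse : (k : ℝ) < (1 / 2) * (1 + 1 / μ)) :
    ∀ i : Fin n, k ≤ (i : ℕ) →
      ‖∑ t : Fin k, x t * ⟪ψ ⟨0, by omega⟩, ψ (Fin.castLE hkn t)⟫_ℂ‖ >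
        ‖∑ t : Fin k, x t * ⟪ψ i, ψ (Fin.castLE hkn t)⟫_ℂ‖ := by
  intro i hi
  let t₀ : Fin k := ⟨0, hk⟩
  have hx : ∀ t, ‖x t‖ ≤ ‖x t₀‖ := fun t => hdec t₀ t (Nat.zero_le t.val)
  have hoff : ∀ t, Fin.castLE hkn t ≠ i := fun t h => by
    have := congrArg Fin.val h
    simp only [Fin.val_castLE] at this
    omega
  have hbelow := norm_sum_mul_inner_le_of_notMem_range hμ hx hoff
  have habove := norm_sub_mul_le_norm_sum_mul_inner hμ hx (Fin.castLE_injective hkn) t₀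
    (hnorm _)
  rw [Fintype.card_fin] at hbelow habove
  have hgap := mul_lt_sub_pred_mul_of_lt_half_one_add_inv hμ0 (norm_pos_iff.mpr (hnz t₀))
    hsparse
  exact hbelow.trans_lt (hgap.trans_le habove)
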